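/- First Borel–Cantelli-type convergence: If g decreases monotonically to zero and ∫_0^∞ u^{d−1} P[w ≤ g(u)]^m du < ∞, where 𝔄 ⊆ 𝔈(B_b) has |𝔄| = m, then almost surely for all sufficiently large n, every z ∈ B_{n+b} has at least one edge e ∈ 𝔄 + z with w_e > g(n). -/

import Mathlib

/-!
Call a site `z` bad if every edge of `𝔄 + z` has conductance at most `g (‖z‖∞ - b)`. By
independence a site is bad with probability `P[w ≤ g (‖z‖∞ - b)] ^ |𝔄|`, which is antitone in
`‖z‖∞`; as only `O(r ^ (d - 1))` sites have sup-norm `r`, the expected number of bad sites is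
dominated by the integral in the hypothesis, and Borel–Cantelli leaves finitely many of them.
A good site `z ∈ B_{n+b}` has an edge with `w > g (‖z‖∞ - b) ≥ g n`; at each of the finitely
many bad sites, `g n → 0` eventually drops below the positive conductance of a fixed edge.
-/

open MeasureTheory ProbabilityTheory Filter Finset Function
open scoped ENNReal

lemma pairwise_disjoint_Ioc_natCast_add_one :
    Pairwise (Disjoint on fun n : ℕ => Set.Ioc ((n : ℝ) + 1) (n + 2)) := by
  convert (Set.pairwise_disjoint_Ioc_add_intCast (1 : ℝ)).comp_of_injective Nat.cast_injective
    using 3 with n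
  simp only [Int.cast_natCast, add_comm (1 : ℝ), add_assoc, one_add_one_eq_two]

lemma tsum_succ_pow_mul_le_setLIntegral {φ : ℝ → ℝ≥0∞} (hφ : Antitone φ) (k : ℕ) :
    ∑' n : ℕ, ((n : ℝ≥0∞) + 1) ^ k * φ (n + 2) ≤
      ∫⁻ u in Set.Ioi 0, ENNReal.ofReal u ^ k * φ u := by
  have hterm (n : ℕ) : ((n : ℝ≥0∞) + 1) ^ k * φ (n + 2) ≤
      ∫⁻ u in Set.Ioc ((n : ℝ) + 1) (n + 2), ENNReal.ofReal u ^ k * φ u := by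
    calc ((n : ℝ≥0∞) + 1) ^ k * φ (n + 2)
        = ∫⁻ _ in Set.Ioc ((n : ℝ) + 1) (n + 2), ((n : ℝ≥0∞) + 1) ^ k * φ (n + 2) := by
          simp [Real.volume_Ioc, show (2 : ℝ) - 1 = 1 by norm_num]
      _ ≤ ∫⁻ u in Set.Ioc ((n : ℝ) + 1) (n + 2), ENNReal.ofReal u ^ k * φ u := by
          refine lintegral_mono_ae ((ae_restrict_iff' measurableSet_Ioc).2 (.of_forall ?_))
          rintro u ⟨hu₁, hu₂⟩
          have hn : (n : ℝ≥0∞) + 1 = ENNReal.ofReal (n + 1) := by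
            rw [ENNReal.ofReal_add (by positivity) zero_le_one, ENNReal.ofReal_natCast,
              ENNReal.ofReal_one]
          rw [hn]
          gcongr
          exact hφ hu₂
  calc ∑' n : ℕ, ((n : ℝ≥0∞) + 1) ^ k * φ (n + 2)
      ≤ ∑' n : ℕ, ∫⁻ u in Set.Ioc ((n : ℝ) + 1) (n + 2), ENNReal.ofReal u ^ k * φ u :=
        ENNReal.tsum_le_tsum hterm
    _ = ∫⁻ u in ⋃ n : ℕ, Set.Ioc ((n : ℝ) + 1) (n + 2), ENNReal.ofReal u ^ k * φ u :=
        (lintegral_iUnion (fun _ => measurableSet_Ioc) pairwise_disjoint_Ioc_natCast_add_one _).symm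
    _ ≤ ∫⁻ u in Set.Ioi 0, ENNReal.ofReal u ^ k * φ u :=
        lintegral_mono_set (Set.iUnion_subset fun n u hu => by
          simp only [Set.mem_Ioi]; linarith [hu.1, (n.cast_nonneg : (0 : ℝ) ≤ n)])

lemma setLIntegral_Ioi_ofReal_pow_eq_top (k : ℕ) :
    ∫⁻ u in Set.Ioi (0 : ℝ), ENNReal.ofReal u ^ k = ∞ := by
  refine top_unique ?_
  calc ∞ = ∫⁻ _ in Set.Ioi (1 : ℝ), 1 := by simp
    _ ≤ ∫⁻ u in Set.Ioi (1 : ℝ), ENNReal.ofReal u ^ k :=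
        lintegral_mono_ae ((ae_restrict_iff' measurableSet_Ioi).2 (.of_forall fun u hu =>
          one_le_pow₀ (ENNReal.one_le_ofReal.2 (le_of_lt hu))))
    _ ≤ ∫⁻ u in Set.Ioi (0 : ℝ), ENNReal.ofReal u ^ k :=
        lintegral_mono_set (Set.Ioi_subset_Ioi zero_le_one)

section IntegerBoxes
variable {ι : Type*} [Fintype ι]

def supNatAbs (z : ι → ℤ) : ℕ := univ.sup fun i => (z i).natAbs

lemma supNatAbs_le_iff {z : ι → ℤ} {n : ℕ} : supNatAbs z ≤ n ↔ ∀ i, |z i| ≤ n := by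
  simp only [supNatAbs, Finset.sup_le_iff, mem_univ, true_implies, Int.abs_eq_natAbs, Nat.cast_le]

variable [DecidableEq ι]

lemma mem_Icc_natCast_iff {z : ι → ℤ} {n : ℕ} : z ∈ Icc (-(n : ι → ℤ)) n ↔ supNatAbs z ≤ n := by
  simp [supNatAbs_le_iff, Pi.le_def, abs_le, forall_and]

lemma mem_box_iff {z : ι → ℤ} {r : ℕ} : z ∈ box r ↔ supNatAbs z = r := by
  cases r with
  | zero =>
    simp only [box, disjointed_zero]
    rw [mem_Icc_natCast_iff]
    omega
  | succ r =>
    rw [box_succ_eq_sdiff, Finset.mem_sdiff, mem_Icc_natCast_iff, mem_Icc_natCast_iff]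
    omega

lemma card_box_succ_le (r : ℕ) :
    #(box (r + 1) : Finset (ι → ℤ)) ≤ 2 * Fintype.card ι * (2 * r + 3) ^ (Fintype.card ι - 1) := by
  have hsub : Icc (-(r : ι → ℤ)) r ⊆ Icc (-(r.succ : ι → ℤ)) r.succ := fun z hz => by
    rw [mem_Icc_natCast_iff] at hz ⊢; omega
  rw [box_succ_eq_sdiff, card_sdiff_of_subset hsub, Pi.card_Icc, Pi.card_Icc]
  simp only [Pi.neg_apply, Pi.natCast_apply, Int.card_Icc, prod_const, card_univ]
  grind [abs_pow_sub_pow_le (α := ℤ) (2 * r + 3) (2 * r + 1) (Fintype.card ι)]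

lemma tsum_comp_supNatAbs (f : ℕ → ℝ≥0∞) :
    ∑' z : ι → ℤ, f (supNatAbs z) = ∑' r, #(box r : Finset (ι → ℤ)) * f r := by
  rw [← ENNReal.tsum_fiberwise _ supNatAbs]
  congr 1 with r
  have hfiber : supNatAbs ⁻¹' {r} = ((box r : Finset (ι → ℤ)) : Set (ι → ℤ)) := by
    ext z; simp [mem_box_iff]
  rw [hfiber, Finset.tsum_subtype' (box r) (fun z => f (supNatAbs z)),
    sum_congr rfl fun z hz => congrArg f (mem_box_iff.mp hz), sum_const, nsmul_eq_mul]

lemma card_box_add_two_le (b k : ℕ) :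
    #(box (k + b + 2) : Finset (ι → ℤ)) ≤
      2 * Fintype.card ι * (2 * b + 5) ^ (Fintype.card ι - 1) * (k + 1) ^ (Fintype.card ι - 1) := by
  calc #(box (k + b + 1 + 1) : Finset (ι → ℤ))
      ≤ 2 * Fintype.card ι * (2 * (k + b + 1) + 3) ^ (Fintype.card ι - 1) := card_box_succ_le _
    _ ≤ 2 * Fintype.card ι * ((2 * b + 5) * (k + 1)) ^ (Fintype.card ι - 1) := by
        gcongr; nlinarith
    _ = _ := by rw [mul_pow]; ring

lemma tsum_supNatAbs_sub_ne_top (b : ℕ) {φ : ℝ → ℝ≥0∞} (hφ : Antitone φ) (hφ_top : ∀ u, φ u ≠ ∞)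
    (hint : ∫⁻ u in Set.Ioi 0, ENNReal.ofReal u ^ (Fintype.card ι - 1) * φ u ≠ ∞) :
    ∑' z : ι → ℤ, φ (supNatAbs z - b) ≠ ∞ := by
  set D := Fintype.card ι - 1
  set C : ℕ := 2 * Fintype.card ι * (2 * b + 5) ^ D
  have htail : ∑' k : ℕ, #(box (k + (b + 2)) : Finset (ι → ℤ)) * φ ((k + (b + 2) : ℕ) - b) ≤
      C * ∑' k : ℕ, ((k : ℝ≥0∞) + 1) ^ D * φ (k + 2) := by
    rw [← ENNReal.tsum_mul_left]
    refine ENNReal.tsum_le_tsum fun k => ?_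
    have hcard : (#(box (k + b + 2) : Finset (ι → ℤ)) : ℝ≥0∞) ≤ C * ((k : ℝ≥0∞) + 1) ^ D := by
      exact_mod_cast card_box_add_two_le b k
    have harg : ((k + (b + 2) : ℕ) : ℝ) - b = k + 2 := by push_cast; ring
    rw [harg, ← add_assoc, ← mul_assoc]
    gcongr
  rw [tsum_comp_supNatAbs (fun r => φ (r - b)),
    ← ENNReal.summable.sum_add_tsum_nat_add' (k := b + 2)]
  refine ENNReal.add_ne_top.2 ⟨ENNReal.sum_ne_top.2 fun r _ => ?_, ?_⟩
  · exact ENNReal.mul_ne_top (ENNReal.natCast_ne_top _) (hφ_top _)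
  · refine ne_top_of_le_ne_top ?_ htail
    exact ENNReal.mul_ne_top (ENNReal.natCast_ne_top _)
      (ne_top_of_le_ne_top hint (tsum_succ_pow_mul_le_setLIntegral hφ D))

end IntegerBoxes

lemma measure_forall_mem_eq_pow {Ω ι κ β : Type*} [MeasurableSpace Ω] [MeasurableSpace β]
    {μ : Measure Ω} {w : ι → Ω → β} {X : Ω → β} (hindep : iIndepFun w μ)
    (hident : ∀ i, IdentDistrib (w i) X μ μ) {σ : κ → ι} (hσ : Injective σ) (s : Finset κ)
    {t : Set β} (ht : MeasurableSet t) :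
    μ {ω | ∀ k ∈ s, w (σ k) ω ∈ t} = μ (X ⁻¹' t) ^ #s := by
  have hinter : {ω | ∀ k ∈ s, w (σ k) ω ∈ t} = ⋂ k ∈ s, w (σ k) ⁻¹' t := by ext; simp
  rw [hinter, (hindep.precomp hσ).meas_biInter fun k _ => ⟨t, ht, rfl⟩,
    prod_congr rfl fun k _ => (hident (σ k)).measure_mem_eq ht, prod_const]

lemma eventually_forall_exists_lt_of_finite {ι κ : Type*} [Fintype ι] {b : ℕ}
    {W : (ι → ℤ) × κ → ℝ} (hW : ∀ e, 0 < W e) {g : ℝ → ℝ} (hg : Antitone g)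
    (hg0 : Tendsto g atTop (nhds 0)) {𝔄 : Finset ((ι → ℤ) × κ)} (h𝔄 : 𝔄.Nonempty)
    (hfin : {z | ∀ e ∈ 𝔄, W (e.1 + z, e.2) ≤ g (supNatAbs z - b)}.Finite) :
    ∀ᶠ n : ℕ in atTop, ∀ z : ι → ℤ, (∀ i, |z i| ≤ (n : ℤ) + b) →
      ∃ e ∈ 𝔄, g n < W (e.1 + z, e.2) := by
  obtain ⟨e₀, he₀⟩ := h𝔄
  have hgn : Tendsto (fun n : ℕ => g n) atTop (nhds 0) := hg0.comp tendsto_natCast_atTop_atTop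
  filter_upwards [(eventually_all_finite hfin).2 fun z _ =>
    hgn.eventually (gt_mem_nhds (hW (e₀.1 + z, e₀.2)))] with n hn z hz
  by_cases hzbad : ∀ e ∈ 𝔄, W (e.1 + z, e.2) ≤ g (supNatAbs z - b)
  · exact ⟨e₀, he₀, hn z hzbad⟩
  · push Not at hzbad
    obtain ⟨e, he, hlt⟩ := hzbad
    have hzn : supNatAbs z ≤ n + b := supNatAbs_le_iff.2 (by exact_mod_cast hz)
    exact ⟨e, he, (hg (sub_le_iff_le_add.2 (by exact_mod_cast hzn))).trans_lt hlt⟩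

/-- First Borel–Cantelli-type convergence (Lemma 2.1, convergent case).  Conductances
`(w_e)` are i.i.d., indexed by the edges `(x, i)` of `ℤ^d` (site plus positive axis
direction), `d ≥ 2`.  If `g : (0,∞) → (0,∞)` decreases monotonically to zero and
`∫_0^∞ u^{d−1} P[w ≤ g(u)]^m du < ∞` with `m = |𝔄|` for an edge set `𝔄 ⊆ 𝔈(B_b)`,
then almost surely, for all sufficiently large `n`, every `z ∈ B_{n+b}` has at least
one edge `e ∈ 𝔄 + z` with `w_e > g(n)`. -/
theorem stmt13 {Ω : Type*} [MeasurableSpace Ω] (μ : Measure Ω) [IsProbabilityMeasure μ]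
    (d b : ℕ) (hd : 2 ≤ d)
    (w : ((Fin d → ℤ) × Fin d) → Ω → ℝ)
    (hpos : ∀ e ω, 0 < w e ω)
    (hindep : iIndepFun w μ)
    (hident : ∀ e e', IdentDistrib (w e) (w e') μ μ)
    (g : ℝ → ℝ) (hganti : Antitone g)
    (hg0 : Tendsto g atTop (nhds 0))
    (𝔄 : Finset ((Fin d → ℤ) × Fin d))
    (F : ℝ → ℝ)
    (hF : ∀ u, F u = (μ {ω | w ((fun _ => 0), ⟨0, by omega⟩) ω ≤ u}).toReal)
    (hconv : ∫⁻ u in Set.Ioi (0 : ℝ),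
        ENNReal.ofReal (u ^ (d - 1) * F (g u) ^ 𝔄.card) < ⊤) :
    μ {ω | ∀ᶠ n : ℕ in atTop, ∀ z : Fin d → ℤ, (∀ i, |z i| ≤ (n : ℤ) + b) →
        ∃ e ∈ 𝔄, g n < w (e.1 + z, e.2) ω} = 1 := by
  set e₀ : (Fin d → ℤ) × Fin d := ((fun _ => 0), ⟨0, by omega⟩)
  set φ : ℝ → ℝ≥0∞ := fun u => μ {ω | w e₀ ω ≤ g u} ^ #𝔄
  have hφ : Antitone φ := fun u v huv =>
    pow_le_pow_left₀ bot_le (measure_mono fun ω hω => le_trans hω (hganti huv)) _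
  have hint : ∫⁻ u in Set.Ioi 0, ENNReal.ofReal u ^ (d - 1) * φ u ≠ ∞ := by
    refine ne_of_eq_of_ne (setLIntegral_congr_fun measurableSet_Ioi fun u hu => ?_) hconv.ne
    rw [hF, ENNReal.ofReal_mul (pow_nonneg (le_of_lt hu) _), ENNReal.ofReal_pow (le_of_lt hu),
      ENNReal.ofReal_pow ENNReal.toReal_nonneg, ENNReal.ofReal_toReal (measure_ne_top _ _)]
  have h𝔄 : 𝔄.Nonempty := by
    rw [nonempty_iff_ne_empty]
    rintro rfl
    simp [φ, setLIntegral_Ioi_ofReal_pow_eq_top] at hint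
  have hbad (z : Fin d → ℤ) :
      μ {ω | ∀ e ∈ 𝔄, w (e.1 + z, e.2) ω ≤ g (supNatAbs z - b)} = φ (supNatAbs z - b) :=
    measure_forall_mem_eq_pow hindep (hident · e₀)
      (σ := fun e : (Fin d → ℤ) × Fin d => (e.1 + z, e.2))
      (fun e e' h => Prod.ext (add_right_cancel congr($h.1)) congr($h.2)) 𝔄 measurableSet_Iic
  have hsum := tsum_supNatAbs_sub_ne_top (ι := Fin d) b hφ
    (fun _ => ENNReal.pow_ne_top (measure_ne_top _ _)) (by rwa [Fintype.card_fin])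
  simp only [← hbad] at hsum
  -- the event is not known to be measurable, so go through `=ᵐ univ` rather than complements
  refine (measure_congr (ae_eq_univ.2 ?_)).trans measure_univ
  filter_upwards [ae_finite_setOfPred_mem hsum] with ω hω
  exact eventually_forall_exists_lt_of_finite (hpos · ω) hganti hg0 h𝔄 hω
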